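/- The family F̂⁻ is admissible, where for 0 ≤ n ≤ 2, F̂⁻_n(r) is the coefficient of z^{−r} in the Laurent polynomial (z − z^{−1})^{2−n}, and for n ≥ 3, F̂⁻_n(r) is the coefficient of z^{−r} in (−∑_{i≥0} z^{2i+1})^{n−2}. -/

import Mathlib

/-- A family of functions `F : ℕ → ℤ → ℚ` is admissible if
(A1) `F 2 0 = 1` and `F 2 r = 0` for `r ≠ 0`, and
(A2) for all `n ≥ 1` and `r ∈ ℤ`, `F n (r+1) - F n (r-1) = F (n-1) r`. -/
def Admissible (F : ℕ → ℤ → ℚ) : Prop :=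
  (F 2 0 = 1 ∧ ∀ r : ℤ, r ≠ 0 → F 2 r = 0) ∧
  (∀ n : ℕ, 1 ≤ n → ∀ r : ℤ, F n (r + 1) - F n (r - 1) = F (n - 1) r)

/-- The coefficient of `z^{-r}` in the Laurent polynomial `(z - z⁻¹)^(2-n)` (for `n ≤ 2`). -/
noncomputable def lowCoeff (n : ℕ) (r : ℤ) : ℚ :=
  ((LaurentPolynomial.T 1 - LaurentPolynomial.T (-1) : LaurentPolynomial ℚ) ^ (2 - n)).coeff (-r)

/-- The power series `∑_{i ≥ 0} w^(2i+1)`, i.e. the expansion of `(w⁻¹ - w)⁻¹·(-1)`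
used in the expansions of `(z - z⁻¹)⁻¹` for `|z| > 1` (with `w = z⁻¹`) and `|z| < 1`
(with `w = z`, up to sign). -/
noncomputable def Sser : PowerSeries ℚ := PowerSeries.mk fun i => if Odd i then 1 else 0

/-- `F̂⁺_n(r)`: for `n ≤ 2`, the coefficient of `z^{-r}` in `(z - z⁻¹)^(2-n)`;
for `n ≥ 3`, the coefficient of `z^{-r}` in `(∑_{i ≥ 0} z^{-(2i+1)})^(n-2)`,
which equals the coefficient of `w^r` in `Sser^(n-2)` (and `0` for `r < 0`). -/
noncomputable def Fhatplus (n : ℕ) (r : ℤ) : ℚ :=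
  if n ≤ 2 then lowCoeff n r
  else if 0 ≤ r then PowerSeries.coeff r.toNat (Sser ^ (n - 2)) else 0

/-- `F̂⁻_n(r)`: for `n ≤ 2`, the coefficient of `z^{-r}` in `(z - z⁻¹)^(2-n)`;
for `n ≥ 3`, the coefficient of `z^{-r}` in `(-∑_{i ≥ 0} z^(2i+1))^(n-2)`,
which equals the coefficient of `z^{-r}` in `(-Sser)^(n-2)` (and `0` for `r > 0`). -/
noncomputable def Fhatminus (n : ℕ) (r : ℤ) : ℚ :=
  if n ≤ 2 then lowCoeff n r
  else if r ≤ 0 then PowerSeries.coeff (-r).toNat ((-Sser) ^ (n - 2)) else 0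

/-- `F̂_n(r)`: the average of `F̂⁺_n(r)` and `F̂⁻_n(r)`
(for `n ≤ 2` both are the coefficient of `z^{-r}` in `(z - z⁻¹)^(2-n)`). -/
noncomputable def Fhat (n : ℕ) (r : ℤ) : ℚ := (Fhatplus n r + Fhatminus n r) / 2

/-! `F̂⁻_n(r)` is the coefficient of `z^{-r}` in `Φ_n`, where `Φ_n = (z - z⁻¹)^(2-n)` for `n ≤ 2` and
`Φ_n = (-S)^(n-2)` for `n ≥ 3`, with `S = ∑ z^(2i+1)`. Since the coefficient of `z^{-r}` in
`(z - z⁻¹) Φ` is `Φ(r+1) - Φ(r-1)`, condition (A2) says `(z - z⁻¹) Φ_n = Φ_{n-1}`. For `n ≤ 2` this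
is a product of Laurent polynomials, and for `n ≥ 3` it amounts to `(z² - 1)(-S) = z`, i.e. `-S` is
the expansion of `(z - z⁻¹)⁻¹` at `|z| < 1`. -/

open LaurentPolynomial in
theorem LaurentPolynomial.coeff_T_one_sub_T_neg_one_mul {R : Type*} [Ring R] (p : R[T;T⁻¹])
    (k : ℤ) : ((T 1 - T (-1)) * p).coeff k = p.coeff (k - 1) - p.coeff (k + 1) := by
  simp only [sub_mul, AddMonoidAlgebra.coeff_sub, Finsupp.sub_apply, LaurentPolynomial.T,
    AddMonoidAlgebra.coeff_single_mul_apply, one_mul, neg_neg, neg_add_eq_sub, add_comm 1 k]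

namespace PowerSeries

section Semiring

variable {R : Type*} [Semiring R]

/-- The coefficient of `z ^ (-r)` in `f(z)`. -/
noncomputable def coeffNeg (f : R⟦X⟧) (r : ℤ) : R :=
  if r ≤ 0 then coeff (-r).toNat f else 0

@[simp]
theorem coeffNeg_neg_natCast (f : R⟦X⟧) (k : ℕ) : f.coeffNeg (-k) = coeff k f := by
  simp [coeffNeg]

theorem coeffNeg_of_pos (f : R⟦X⟧) {r : ℤ} (hr : 0 < r) : f.coeffNeg r = 0 :=
  if_neg hr.not_ge

theorem coeffNeg_X_mul (f : R⟦X⟧) (r : ℤ) : (X * f).coeffNeg r = f.coeffNeg (r + 1) := by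
  rcases le_or_gt 0 r with hr | hr
  · rcases hr.eq_or_lt with rfl | hr
    · simp [coeffNeg]
    · rw [coeffNeg_of_pos _ hr, coeffNeg_of_pos _ (by omega)]
  · obtain ⟨k, rfl⟩ : ∃ k : ℕ, r = -(k + 1 : ℕ) := ⟨(-r - 1).toNat, by omega⟩
    rw [coeffNeg_neg_natCast, coeff_succ_X_mul, ← coeffNeg_neg_natCast]
    congr 1
    push_cast
    ring

theorem coeffNeg_one (r : ℤ) : (1 : R⟦X⟧).coeffNeg r = if r = 0 then 1 else 0 := by
  unfold coeffNeg
  split_ifs with hr₀ hr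
  · simp [hr]
  · rw [coeff_one, if_neg (by omega)]
  · omega
  · rfl

end Semiring

variable {R : Type*} [Ring R]

theorem coeffNeg_sub (f g : R⟦X⟧) (r : ℤ) :
    (f - g).coeffNeg r = f.coeffNeg r - g.coeffNeg r := by
  unfold coeffNeg
  split_ifs <;> simp

theorem coeffNeg_add_one_sub_coeffNeg_sub_one {G H : R⟦X⟧} (h : (X ^ 2 - 1) * G = X * H)
    (r : ℤ) : G.coeffNeg (r + 1) - G.coeffNeg (r - 1) = H.coeffNeg r := by
  simpa only [sub_mul, one_mul, pow_two, mul_assoc, coeffNeg_sub, coeffNeg_X_mul, sub_add_cancel]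
    using congrArg (coeffNeg · (r - 1)) h

end PowerSeries

open PowerSeries

theorem X_sq_sub_one_mul_neg_Sser : (X ^ 2 - 1) * -Sser = X := by
  ext n
  rw [show (X ^ 2 - 1) * -Sser = Sser - X ^ 2 * Sser by ring, map_sub, coeff_X_pow_mul']
  rcases n with _ | _ | n
  · simp [Sser]
  · simp [Sser]
  · simp [Sser, Nat.odd_add, coeff_X, parity_simps]

theorem lowCoeff_add_one_sub_lowCoeff_sub_one {n : ℕ} (hn : 1 ≤ n) (hn2 : n ≤ 2) (r : ℤ) :
    lowCoeff n (r + 1) - lowCoeff n (r - 1) = lowCoeff (n - 1) r := by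
  rw [lowCoeff, lowCoeff, lowCoeff, show 2 - (n - 1) = 2 - n + 1 by omega, pow_succ',
    LaurentPolynomial.coeff_T_one_sub_T_neg_one_mul]
  ring_nf

theorem Fhatminus_two (r : ℤ) : Fhatminus 2 r = if r = 0 then 1 else 0 := by
  rw [Fhatminus, if_pos le_rfl, lowCoeff, Nat.sub_self, pow_zero, ← LaurentPolynomial.T_zero,
    LaurentPolynomial.T_apply]
  simp only [zero_eq_neg]

theorem Fhatminus_add_two (m : ℕ) (r : ℤ) : Fhatminus (m + 2) r = ((-Sser) ^ m).coeffNeg r := by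
  rcases m with _ | m
  · rw [Fhatminus_two, pow_zero, coeffNeg_one]
  · rw [Fhatminus, if_neg (by omega), Nat.add_sub_cancel, coeffNeg]

/-- The family `F̂⁻` is admissible. -/
theorem Fhatminus_admissible : Admissible Fhatminus := by
  refine ⟨⟨by simp [Fhatminus_two], fun r hr => by simp [Fhatminus_two, hr]⟩, fun n hn r => ?_⟩
  rcases le_or_gt n 2 with hn2 | hn2
  · simp only [Fhatminus, if_pos hn2, if_pos (show n - 1 ≤ 2 by omega)]
    exact lowCoeff_add_one_sub_lowCoeff_sub_one hn hn2 r
  · obtain ⟨m, rfl⟩ : ∃ m, n = m + 1 + 2 := ⟨n - 3, by omega⟩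
    rw [show m + 1 + 2 - 1 = m + 2 from rfl, Fhatminus_add_two (m + 1), Fhatminus_add_two m]
    apply coeffNeg_add_one_sub_coeffNeg_sub_one
    rw [pow_succ' (-Sser), ← mul_assoc, X_sq_sub_one_mul_neg_Sser]
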